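/- arXiv:1605.08233 — 4 statements merged into one kernel-verified Lean document; each statement's English description precedes it below -/
import Mathlib

section
/- If B is a real symmetric positive semidefinite n×n matrix and C is a real symmetric positive definite n×n matrix, then tr(B C⁻¹) ≥ tr(B(2I − C)). -/
open Matrix

/-!
Since `C⁻¹ - 2 + C = (C - 1) C⁻¹ (C - 1)` is positive semidefinite and the trace of a product
of two positive semidefinite matrices is nonnegative,
`tr (B C⁻¹) - tr (B (2 - C)) = tr (B (C⁻¹ - 2 + C)) ≥ 0`.
-/

open scoped ComplexOrder MatrixOrder

namespace Matrix

variable {n 𝕜 : Type*} [Fintype n] [RCLike 𝕜]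

theorem PosSemidef.trace_mul_nonneg {A B : Matrix n n 𝕜} (hA : A.PosSemidef)
    (hB : B.PosSemidef) : 0 ≤ (A * B).trace := by
  classical
  obtain ⟨X, rfl⟩ := CStarAlgebra.nonneg_iff_eq_star_mul_self.mp hA.nonneg
  rw [star_eq_conjTranspose, Matrix.mul_assoc, trace_mul_comm]
  exact (hB.mul_mul_conjTranspose_same X).trace_nonneg

theorem PosDef.posSemidef_inv_add_sub_two [DecidableEq n] {C : Matrix n n 𝕜} (hC : C.PosDef) :
    (C⁻¹ + C - 2 • 1).PosSemidef := by
  have hCinv : C * C⁻¹ = 1 := mul_nonsing_inv C (isUnit_iff_isUnit_det C |>.mp hC.isUnit)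
  have hinvC : C⁻¹ * C = 1 := nonsing_inv_mul C (isUnit_iff_isUnit_det C |>.mp hC.isUnit)
  have h : C⁻¹ + C - 2 • 1 = (C - 1) * C⁻¹ * (C - 1)ᴴ := by
    rw [conjTranspose_sub, hC.isHermitian.eq, conjTranspose_one]
    simp only [Matrix.sub_mul, Matrix.mul_sub, Matrix.one_mul, Matrix.mul_one, hCinv, hinvC]
    abel
  rw [h]
  exact hC.inv.posSemidef.mul_mul_conjTranspose_same _

end Matrix

theorem trace_mul_inv_ge {n : ℕ} (B C : Matrix (Fin n) (Fin n) ℝ)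
    (hB : B.PosSemidef) (hC : C.PosDef) :
    Matrix.trace (B * (2 • (1 : Matrix (Fin n) (Fin n) ℝ) - C)) ≤ Matrix.trace (B * C⁻¹) := by
  have key := hB.trace_mul_nonneg hC.posSemidef_inv_add_sub_two
  rwa [show B * (C⁻¹ + C - 2 • 1) = B * C⁻¹ - B * (2 • 1 - C) by noncomm_ring, trace_sub,
    sub_nonneg] at key
end

section
/- Let A ∈ ℝ^{n×n} be symmetric with eigen-decomposition A = V Σ Vᵀ + V_⊥ Σ_⊥ V_⊥ᵀ, where V ∈ ℝ^{n×k} holds the top-k eigenvectors (eigenvalues λ₁ ≥ ⋯ ≥ λ_k) and V_⊥ the rest (λ_{k+1} ≥ ⋯ ≥ λ_n), with eigen-gap τ = λ_k − λ_{k+1} > 0. Then for any X ∈ ℝ^{n×k} with orthonormal columns and orthonormal complement X_⊥, tr(Xᵀ V Vᵀ X_⊥ X_⊥ᵀ A X) ≥ τ (‖Vᵀ X‖_F² − ‖Xᵀ V Vᵀ X‖_F²). -/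
open Matrix

/-- Squared Frobenius norm of a real matrix. -/
noncomputable def frobSq {m n : ℕ} (A : Matrix (Fin m) (Fin n) ℝ) : ℝ :=
  Matrix.trace (Aᵀ * A)

private lemma trace_diagonal_mul_ge {p : ℕ} (d : Fin p → ℝ) (c : ℝ)
    (hd : ∀ i, c ≤ d i) (M : Matrix (Fin p) (Fin p) ℝ) (hM : ∀ i, 0 ≤ M i i) :
    c * M.trace ≤ (Matrix.diagonal d * M).trace := by
  have h1 : (Matrix.diagonal d * M).trace = ∑ i, d i * M i i := by
    simp [Matrix.trace, Matrix.diag, Matrix.diagonal_mul]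
  rw [h1, Matrix.trace]
  simp only [Matrix.diag]
  rw [Finset.mul_sum]
  exact Finset.sum_le_sum fun i _ => mul_le_mul_of_nonneg_right (hd i) (hM i)

private lemma trace_diagonal_mul_le {p : ℕ} (d : Fin p → ℝ) (c : ℝ)
    (hd : ∀ i, d i ≤ c) (M : Matrix (Fin p) (Fin p) ℝ) (hM : ∀ i, 0 ≤ M i i) :
    (Matrix.diagonal d * M).trace ≤ c * M.trace := by
  have h1 : (Matrix.diagonal d * M).trace = ∑ i, d i * M i i := by
    simp [Matrix.trace, Matrix.diag, Matrix.diagonal_mul]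
  rw [h1, Matrix.trace]
  simp only [Matrix.diag]
  rw [Finset.mul_sum]
  exact Finset.sum_le_sum fun i _ => mul_le_mul_of_nonneg_right (hd i) (hM i)

private lemma diag_transpose_mul_self_nonneg {p q : ℕ}
    (N : Matrix (Fin p) (Fin q) ℝ) (i : Fin q) : 0 ≤ (Nᵀ * N) i i := by
  rw [Matrix.mul_apply]
  exact Finset.sum_nonneg fun j _ => by
    simp only [Matrix.transpose_apply]; exact mul_self_nonneg _

/-- Lemma 10: eigen-gap lower bound on the cross term. Here n = k + m. -/
theorem eigengap_cross_term_bound {k m : ℕ} (hk : 0 < k) (hm : 0 < m)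
    (A : Matrix (Fin (k + m)) (Fin (k + m)) ℝ)
    (V : Matrix (Fin (k + m)) (Fin k) ℝ)
    (Vp : Matrix (Fin (k + m)) (Fin m) ℝ)
    (lam : Fin (k + m) → ℝ) (hlam : Antitone lam)
    (hV : Vᵀ * V = 1) (hVp : Vpᵀ * Vp = 1)
    (hVfull : V * Vᵀ + Vp * Vpᵀ = 1)
    (hA : A = V * Matrix.diagonal (fun i : Fin k => lam (Fin.castAdd m i)) * Vᵀ
            + Vp * Matrix.diagonal (fun j : Fin m => lam (Fin.natAdd k j)) * Vpᵀ)
    (τ : ℝ)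
    (hτ : τ = lam (Fin.castAdd m ⟨k - 1, Nat.sub_lt hk one_pos⟩)
            - lam (Fin.natAdd k ⟨0, hm⟩))
    (hτpos : 0 < τ)
    (X : Matrix (Fin (k + m)) (Fin k) ℝ)
    (Xp : Matrix (Fin (k + m)) (Fin m) ℝ)
    (hX : Xᵀ * X = 1) (hXp : Xpᵀ * Xp = 1)
    (hXfull : X * Xᵀ + Xp * Xpᵀ = 1) :
    τ * (frobSq (Vᵀ * X) - frobSq (Xᵀ * V * Vᵀ * X))
      ≤ Matrix.trace (Xᵀ * V * Vᵀ * Xp * Xpᵀ * A * X) := by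
  -- abbreviations (kept explicit): B = Xᵀ*V, Bᵀ = Vᵀ*X, C = Xᵀ*Vp, Cᵀ = Vpᵀ*X
  -- orthogonality of V and Vp
  have hVpV : Vpᵀ * V = 0 := by
    have h := congrArg (fun M => Vpᵀ * M * V) hVfull
    simp only [Matrix.add_mul, Matrix.mul_add, Matrix.one_mul, Matrix.mul_one] at h
    have e1 : Vpᵀ * (V * Vᵀ) * V = Vpᵀ * V := by
      rw [Matrix.mul_assoc, Matrix.mul_assoc, hV, Matrix.mul_one]
    have e2 : Vpᵀ * (Vp * Vpᵀ) * V = Vpᵀ * V := by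
      rw [← Matrix.mul_assoc, hVp, Matrix.one_mul]
    rw [e1, e2] at h
    exact (add_eq_left).mp h
  have hVVp : Vᵀ * Vp = 0 := by
    have := congrArg Matrix.transpose hVpV
    simpa using this
  -- reassociated rewrite rules
  have hV' : ∀ {p : ℕ} (M : Matrix (Fin k) (Fin p) ℝ), Vᵀ * (V * M) = M := by
    intro p M; rw [← Matrix.mul_assoc, hV, Matrix.one_mul]
  have hVp' : ∀ {p : ℕ} (M : Matrix (Fin m) (Fin p) ℝ), Vpᵀ * (Vp * M) = M := by
    intro p M; rw [← Matrix.mul_assoc, hVp, Matrix.one_mul]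
  have hVVp' : ∀ {p : ℕ} (M : Matrix (Fin m) (Fin p) ℝ), Vᵀ * (Vp * M) = 0 := by
    intro p M; rw [← Matrix.mul_assoc, hVVp, Matrix.zero_mul]
  have hVpV' : ∀ {p : ℕ} (M : Matrix (Fin k) (Fin p) ℝ), Vpᵀ * (V * M) = 0 := by
    intro p M; rw [← Matrix.mul_assoc, hVpV, Matrix.zero_mul]
  have hXpXp : Xp * Xpᵀ = 1 - X * Xᵀ := by
    rw [← hXfull]; abel
  have hXpXp' : ∀ (M : Matrix (Fin (k+m)) (Fin k) ℝ),
      Xp * (Xpᵀ * M) = M - X * (Xᵀ * M) := by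
    intro M
    rw [← Matrix.mul_assoc, hXpXp, Matrix.sub_mul, Matrix.one_mul, Matrix.mul_assoc]
  set D1 : Matrix (Fin k) (Fin k) ℝ :=
    Matrix.diagonal (fun i : Fin k => lam (Fin.castAdd m i)) with hD1
  set D2 : Matrix (Fin m) (Fin m) ℝ :=
    Matrix.diagonal (fun j : Fin m => lam (Fin.natAdd k j)) with hD2
  -- main algebraic identity
  have key : Xᵀ * V * Vᵀ * Xp * Xpᵀ * A * X
      = Xᵀ * (V * (D1 * (Vᵀ * X)))
        - Xᵀ * (V * (Vᵀ * (X * (Xᵀ * (V * (D1 * (Vᵀ * X)))))))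
        - Xᵀ * (V * (Vᵀ * (X * (Xᵀ * (Vp * (D2 * (Vpᵀ * X))))))) := by
    simp only [Matrix.mul_assoc]
    rw [hXpXp' (A * X), hA]
    simp only [Matrix.add_mul, Matrix.mul_add, Matrix.mul_sub, Matrix.sub_mul,
      Matrix.mul_assoc, hV', hVp', hVVp', hVpV', Matrix.mul_zero, Matrix.zero_mul,
      add_zero, zero_add]
    abel
  -- more reassociated rules
  have hX' : ∀ {p : ℕ} (M : Matrix (Fin k) (Fin p) ℝ), Xᵀ * (X * M) = M := by
    intro p M; rw [← Matrix.mul_assoc, hX, Matrix.one_mul]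
  have hVpVp : Vp * Vpᵀ = 1 - V * Vᵀ := by
    rw [← hVfull]; abel
  have hVpVp' : ∀ (M : Matrix (Fin (k+m)) (Fin k) ℝ),
      Vp * (Vpᵀ * M) = M - V * (Vᵀ * M) := by
    intro M
    rw [← Matrix.mul_assoc, hVpVp, Matrix.sub_mul, Matrix.one_mul, Matrix.mul_assoc]
  -- N1 = Cᵀ B  (where B = Xᵀ V, C = Xᵀ Vp)
  set N1 : Matrix (Fin m) (Fin k) ℝ := Vpᵀ * (X * (Xᵀ * V)) with hN1def
  have hM1 : N1ᵀ * N1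
      = Vᵀ * (X * (Xᵀ * V)) - Vᵀ * (X * (Xᵀ * (V * (Vᵀ * (X * (Xᵀ * V)))))) := by
    rw [hN1def]
    simp only [Matrix.transpose_mul, Matrix.transpose_transpose, Matrix.mul_assoc]
    rw [hVpVp' (X * (Xᵀ * V))]
    simp only [Matrix.mul_sub, Matrix.sub_mul, Matrix.mul_assoc, hX']
  have hM2 : N1 * N1ᵀ
      = Vpᵀ * (X * (Xᵀ * (V * (Vᵀ * (X * (Xᵀ * Vp)))))) := by
    rw [hN1def]
    simp only [Matrix.transpose_mul, Matrix.transpose_transpose, Matrix.mul_assoc]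
  -- diagonal entries nonneg
  have hd1nn : ∀ i, 0 ≤ (N1ᵀ * N1) i i := diag_transpose_mul_self_nonneg N1
  have hd2nn : ∀ i, 0 ≤ (N1 * N1ᵀ) i i := by
    intro i
    have := diag_transpose_mul_self_nonneg N1ᵀ i
    rwa [Matrix.transpose_transpose] at this
  -- eigenvalue bounds on the diagonal
  have hd1 : ∀ i : Fin k,
      lam (Fin.castAdd m ⟨k - 1, Nat.sub_lt hk one_pos⟩) ≤ lam (Fin.castAdd m i) := by
    intro i
    apply hlam
    rw [Fin.le_def]
    simp only [Fin.coe_castAdd]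
    have := i.isLt
    omega
  have hd2 : ∀ j : Fin m, lam (Fin.natAdd k j) ≤ lam (Fin.natAdd k ⟨0, hm⟩) := by
    intro j
    apply hlam
    rw [Fin.le_def]
    simp only [Fin.coe_natAdd]
    omega
  -- trace rearrangements
  have e1 : Matrix.trace (Xᵀ * (V * (D1 * (Vᵀ * X))))
      = Matrix.trace (D1 * (Vᵀ * (X * (Xᵀ * V)))) := by
    rw [show Xᵀ * (V * (D1 * (Vᵀ * X))) = Xᵀ * V * D1 * (Vᵀ * X) from by
      simp only [Matrix.mul_assoc]]
    rw [Matrix.trace_mul_cycle, Matrix.trace_mul_comm]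
    simp only [Matrix.mul_assoc]
  have e2 : Matrix.trace (Xᵀ * (V * (Vᵀ * (X * (Xᵀ * (V * (D1 * (Vᵀ * X))))))))
      = Matrix.trace (D1 * (Vᵀ * (X * (Xᵀ * (V * (Vᵀ * (X * (Xᵀ * V)))))))) := by
    rw [show Xᵀ * (V * (Vᵀ * (X * (Xᵀ * (V * (D1 * (Vᵀ * X)))))))
        = Xᵀ * V * (Vᵀ * X) * (Xᵀ * V) * D1 * (Vᵀ * X) from by
      simp only [Matrix.mul_assoc]]
    rw [Matrix.trace_mul_cycle, Matrix.trace_mul_comm]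
    simp only [Matrix.mul_assoc]
  have e3 : Matrix.trace (Xᵀ * (V * (Vᵀ * (X * (Xᵀ * (Vp * (D2 * (Vpᵀ * X))))))))
      = Matrix.trace (D2 * (Vpᵀ * (X * (Xᵀ * (V * (Vᵀ * (X * (Xᵀ * Vp)))))))) := by
    rw [show Xᵀ * (V * (Vᵀ * (X * (Xᵀ * (Vp * (D2 * (Vpᵀ * X)))))))
        = Xᵀ * V * (Vᵀ * X) * (Xᵀ * Vp) * D2 * (Vpᵀ * X) from by
      simp only [Matrix.mul_assoc]]
    rw [Matrix.trace_mul_cycle, Matrix.trace_mul_comm]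
    simp only [Matrix.mul_assoc]
  -- frobSq values
  have f1 : frobSq (Vᵀ * X) = Matrix.trace (Vᵀ * (X * (Xᵀ * V))) := by
    rw [frobSq, Matrix.transpose_mul, Matrix.transpose_transpose,
      Matrix.trace_mul_comm]
    simp only [Matrix.mul_assoc]
  have f2 : frobSq (Xᵀ * V * Vᵀ * X)
      = Matrix.trace (Vᵀ * (X * (Xᵀ * (V * (Vᵀ * (X * (Xᵀ * V))))))) := by
    rw [frobSq]
    rw [show (Xᵀ * V * Vᵀ * X)ᵀ * (Xᵀ * V * Vᵀ * X)
        = (Xᵀ * V) * ((Vᵀ * X) * (Xᵀ * V) * (Vᵀ * X)) from by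
      simp only [Matrix.transpose_mul, Matrix.transpose_transpose, Matrix.mul_assoc]]
    rw [Matrix.trace_mul_comm]
    simp only [Matrix.mul_assoc]
  -- combine
  have tkey := congrArg Matrix.trace key
  rw [Matrix.trace_sub, Matrix.trace_sub, e1, e2, e3] at tkey
  have hsub : Matrix.trace (D1 * (Vᵀ * (X * (Xᵀ * V))))
      - Matrix.trace (D1 * (Vᵀ * (X * (Xᵀ * (V * (Vᵀ * (X * (Xᵀ * V))))))))
      = Matrix.trace (D1 * (N1ᵀ * N1)) := by
    rw [hM1, Matrix.mul_sub, Matrix.trace_sub]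
  have b1 : lam (Fin.castAdd m ⟨k - 1, Nat.sub_lt hk one_pos⟩)
        * Matrix.trace (N1ᵀ * N1) ≤ Matrix.trace (D1 * (N1ᵀ * N1)) := by
    rw [hD1]
    exact trace_diagonal_mul_ge _ _ hd1 _ hd1nn
  have b2 : Matrix.trace (D2 * (N1 * N1ᵀ))
      ≤ lam (Fin.natAdd k ⟨0, hm⟩) * Matrix.trace (N1 * N1ᵀ) := by
    rw [hD2]
    exact trace_diagonal_mul_le _ _ hd2 _ hd2nn
  have htr : Matrix.trace (N1 * N1ᵀ) = Matrix.trace (N1ᵀ * N1) :=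
    Matrix.trace_mul_comm N1 N1ᵀ
  have hs : Matrix.trace (N1ᵀ * N1)
      = Matrix.trace (Vᵀ * (X * (Xᵀ * V)))
        - Matrix.trace (Vᵀ * (X * (Xᵀ * (V * (Vᵀ * (X * (Xᵀ * V))))))) := by
    rw [hM1, Matrix.trace_sub]
  rw [tkey, f1, f2, hτ]
  rw [hM2] at b2 htr
  rw [htr] at b2
  rw [← hs, sub_mul]
  linarith [b1, b2]
end

section
/- Let X, X̃, V ∈ St(n,k), let X_⊥ be an orthonormal complement of X, X̃_⊥ an orthonormal complement of X̃, and V_⊥ an orthonormal complement of V. Then ‖X_⊥ᵀ X̃‖_F² ≤ 2(k − ‖VᵀX‖_F² + k − ‖VᵀX̃‖_F²). -/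
open Matrix

lemma frobSq_nonneg {m n : ℕ} (A : Matrix (Fin m) (Fin n) ℝ) : 0 ≤ frobSq A := by
  simp only [frobSq, Matrix.trace, Matrix.diag, Matrix.mul_apply, Matrix.transpose_apply]
  exact Finset.sum_nonneg fun j _ => Finset.sum_nonneg fun i _ => mul_self_nonneg _

lemma frobSq_transpose {m n : ℕ} (A : Matrix (Fin m) (Fin n) ℝ) : frobSq Aᵀ = frobSq A := by
  rw [frobSq, frobSq, Matrix.transpose_transpose, Matrix.trace_mul_comm]

lemma split_left {m p q r : ℕ} (M : Matrix (Fin m) (Fin q) ℝ)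
    (Y : Matrix (Fin m) (Fin p) ℝ) (Yp : Matrix (Fin m) (Fin r) ℝ)
    (h : Y * Yᵀ + Yp * Ypᵀ = 1) :
    frobSq (Yᵀ * M) + frobSq (Ypᵀ * M) = frobSq M := by
  have h1 : frobSq (Yᵀ * M) = Matrix.trace (Mᵀ * (Y * Yᵀ) * M) := by
    simp [frobSq, Matrix.transpose_mul, Matrix.mul_assoc]
  have h2 : frobSq (Ypᵀ * M) = Matrix.trace (Mᵀ * (Yp * Ypᵀ) * M) := by
    simp [frobSq, Matrix.transpose_mul, Matrix.mul_assoc]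
  rw [h1, h2, ← Matrix.trace_add, ← Matrix.add_mul, ← Matrix.mul_add, h, Matrix.mul_one, frobSq]

lemma split_right {m p q r : ℕ} (M : Matrix (Fin m) (Fin q) ℝ)
    (Y : Matrix (Fin q) (Fin p) ℝ) (Yp : Matrix (Fin q) (Fin r) ℝ)
    (h : Y * Yᵀ + Yp * Ypᵀ = 1) :
    frobSq (M * Y) + frobSq (M * Yp) = frobSq M := by
  have h1 : frobSq (M * Y) = Matrix.trace (Mᵀ * M * (Y * Yᵀ)) := by
    rw [frobSq, Matrix.transpose_mul, Matrix.mul_assoc, Matrix.trace_mul_comm]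
    rw [Matrix.mul_assoc, Matrix.mul_assoc, ← Matrix.mul_assoc Mᵀ]
  have h2 : frobSq (M * Yp) = Matrix.trace (Mᵀ * M * (Yp * Ypᵀ)) := by
    rw [frobSq, Matrix.transpose_mul, Matrix.mul_assoc, Matrix.trace_mul_comm]
    rw [Matrix.mul_assoc, Matrix.mul_assoc, ← Matrix.mul_assoc Mᵀ]
  rw [h1, h2, ← Matrix.trace_add, ← Matrix.mul_add, h, Matrix.mul_one, frobSq]

lemma frobSq_add_le {m n : ℕ} (A B : Matrix (Fin m) (Fin n) ℝ) :
    frobSq (A + B) ≤ 2 * (frobSq A + frobSq B) := by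
  have key : frobSq (A + B) + frobSq (A - B) = 2 * (frobSq A + frobSq B) := by
    simp only [frobSq, Matrix.transpose_add, Matrix.transpose_sub, Matrix.add_mul,
      Matrix.mul_add, Matrix.sub_mul, Matrix.mul_sub, Matrix.trace_add, Matrix.trace_sub]
    ring
  have := frobSq_nonneg (A - B)
  linarith

theorem cross_overlap_bound {n k : ℕ}
    (X Xt V : Matrix (Fin n) (Fin k) ℝ)
    (Xp Xtp Vp : Matrix (Fin n) (Fin (n - k)) ℝ)
    (hX : Xᵀ * X = 1) (hXt : Xtᵀ * Xt = 1) (hV : Vᵀ * V = 1)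
    (hXp : Xpᵀ * Xp = 1) (hXtp : Xtpᵀ * Xtp = 1) (hVp : Vpᵀ * Vp = 1)
    (hXfull : X * Xᵀ + Xp * Xpᵀ = 1)
    (hXtfull : Xt * Xtᵀ + Xtp * Xtpᵀ = 1)
    (hVfull : V * Vᵀ + Vp * Vpᵀ = 1) :
    frobSq (Xpᵀ * Xt) ≤ 2 * ((k : ℝ) - frobSq (Vᵀ * X) + ((k : ℝ) - frobSq (Vᵀ * Xt))) := by
  set A := (Xpᵀ * V) * (Vᵀ * Xt) with hAdef
  set B := (Xpᵀ * Vp) * (Vpᵀ * Xt) with hBdef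
  have hsum : Xpᵀ * Xt = A + B := by
    rw [hAdef, hBdef, Matrix.mul_assoc, Matrix.mul_assoc, ← Matrix.mul_add,
      ← Matrix.mul_assoc V, ← Matrix.mul_assoc Vp, ← Matrix.add_mul, hVfull, Matrix.one_mul]
  -- (VᵀXt)(VᵀXt)ᵀ + (VᵀXtp)(VᵀXtp)ᵀ = 1
  have hc1 : (Vᵀ * Xt) * (Vᵀ * Xt)ᵀ + (Vᵀ * Xtp) * (Vᵀ * Xtp)ᵀ = 1 := by
    simp only [Matrix.transpose_mul, Matrix.transpose_transpose]
    rw [Matrix.mul_assoc, Matrix.mul_assoc, ← Matrix.mul_assoc Xt, ← Matrix.mul_assoc Xtp,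
      ← Matrix.mul_add, ← Matrix.add_mul, hXtfull, Matrix.one_mul, hV]
  have hA_le : frobSq A ≤ frobSq (Xpᵀ * V) := by
    have := split_right (Xpᵀ * V) (Vᵀ * Xt) (Vᵀ * Xtp) hc1
    have h0 := frobSq_nonneg ((Xpᵀ * V) * (Vᵀ * Xtp))
    linarith
  -- (VpᵀXp)(VpᵀXp)ᵀ + (VpᵀX)(VpᵀX)ᵀ = 1
  have hc2 : (Vpᵀ * Xp) * (Vpᵀ * Xp)ᵀ + (Vpᵀ * X) * (Vpᵀ * X)ᵀ = 1 := by
    simp only [Matrix.transpose_mul, Matrix.transpose_transpose]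
    rw [Matrix.mul_assoc, Matrix.mul_assoc, ← Matrix.mul_assoc Xp, ← Matrix.mul_assoc X,
      ← Matrix.mul_add, ← Matrix.add_mul, add_comm (Xp * Xpᵀ), hXfull, Matrix.one_mul, hVp]
  have hB_le : frobSq B ≤ frobSq (Vpᵀ * Xt) := by
    have hs := split_left (Vpᵀ * Xt) (Vpᵀ * Xp) (Vpᵀ * X) hc2
    have h0 := frobSq_nonneg ((Vpᵀ * X)ᵀ * (Vpᵀ * Xt))
    have hBt : frobSq ((Vpᵀ * Xp)ᵀ * (Vpᵀ * Xt)) = frobSq B := by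
      rw [hBdef]
      simp [Matrix.transpose_mul]
    linarith
  -- frobSq (XpᵀV) = k - frobSq (VᵀX)
  have hVk : frobSq V = (k : ℝ) := by
    simp [frobSq, hV]
  have hXtk : frobSq Xt = (k : ℝ) := by
    simp [frobSq, hXt]
  have hE1 : frobSq (Xpᵀ * V) = (k : ℝ) - frobSq (Vᵀ * X) := by
    have hs := split_left V X Xp hXfull
    have ht : frobSq (Xᵀ * V) = frobSq (Vᵀ * X) := by
      rw [← frobSq_transpose (Xᵀ * V)]
      simp [Matrix.transpose_mul]
    linarith
  have hE2 : frobSq (Vpᵀ * Xt) = (k : ℝ) - frobSq (Vᵀ * Xt) := by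
    have hs := split_left Xt V Vp hVfull
    linarith
  calc frobSq (Xpᵀ * Xt) = frobSq (A + B) := by rw [hsum]
    _ ≤ 2 * (frobSq A + frobSq B) := frobSq_add_le A B
    _ ≤ 2 * (frobSq (Xpᵀ * V) + frobSq (Vpᵀ * Xt)) := by linarith
    _ = 2 * ((k : ℝ) - frobSq (Vᵀ * X) + ((k : ℝ) - frobSq (Vᵀ * Xt))) := by rw [hE1, hE2]
end

section
/- Let Y = X + αN where X ∈ St(n,k), N ∈ ℝ^{n×k} satisfies XᵀN = 0 and ‖N‖₂ ≤ 5, and 0 < α < 1/5. Let X' = Y(YᵀY)^{−1/2}. Then for any V ∈ ℝ^{n×k} with orthonormal columns, | ‖VᵀX'‖_F² − ‖VᵀX‖_F² | ≤ 20kα/(1 − 5α). -/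
open Matrix

set_option maxHeartbeats 1000000

lemma trace_sq_eq {m n : ℕ} (A : Matrix (Fin m) (Fin n) ℝ) :
    trace (Aᵀ * A) = ∑ j, ∑ i, (A i j)^2 := by
  simp [Matrix.trace, Matrix.diag, Matrix.mul_apply, sq]

lemma trace_sq_nonneg {m n : ℕ} (A : Matrix (Fin m) (Fin n) ℝ) :
    0 ≤ trace (Aᵀ * A) := by
  rw [trace_sq_eq]; positivity

lemma trace_proj_le {n k m : ℕ} (V : Matrix (Fin n) (Fin k) ℝ) (hV : Vᵀ * V = 1)
    (A : Matrix (Fin n) (Fin m) ℝ) :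
    trace ((Vᵀ * A)ᵀ * (Vᵀ * A)) ≤ trace (Aᵀ * A) := by
  set R : Matrix (Fin n) (Fin m) ℝ := A - V * (Vᵀ * A) with hR
  have hVR : Vᵀ * R = 0 := by
    rw [hR, Matrix.mul_sub, ← Matrix.mul_assoc, ← Matrix.mul_assoc, hV, Matrix.one_mul, sub_self]
  have hRV : Rᵀ * V = 0 := by
    have := congrArg Matrix.transpose hVR
    simpa [Matrix.transpose_mul] using this
  have hsplit : Aᵀ * A = Rᵀ * R + (Vᵀ * A)ᵀ * (Vᵀ * A) := by
    have hA : A = R + V * (Vᵀ * A) := by rw [hR]; abel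
    calc Aᵀ * A = (R + V * (Vᵀ * A))ᵀ * (R + V * (Vᵀ * A)) := by rw [← hA]
    _ = Rᵀ * R + Rᵀ * (V * (Vᵀ * A)) + ((Vᵀ * A)ᵀ * Vᵀ) * R
          + (Vᵀ * A)ᵀ * (Vᵀ * V) * (Vᵀ * A) := by
        simp only [Matrix.transpose_add, Matrix.transpose_mul, Matrix.add_mul, Matrix.mul_add,
          Matrix.mul_assoc]
        abel
    _ = Rᵀ * R + (Vᵀ * A)ᵀ * (Vᵀ * A) := by
        rw [← Matrix.mul_assoc Rᵀ V, hRV, hV]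
        simp only [Matrix.zero_mul, add_zero, Matrix.one_mul, zero_add]
        rw [show (Vᵀ * A)ᵀ * Vᵀ * R = (Vᵀ * A)ᵀ * (Vᵀ * R) from Matrix.mul_assoc _ _ _, hVR]
        simp
  have h0 : 0 ≤ trace (Rᵀ * R) := trace_sq_nonneg R
  rw [hsplit, Matrix.trace_add]
  linarith

lemma trace_N_bound {n k m : ℕ} (N : Matrix (Fin n) (Fin k) ℝ)
    (hN2 : ∀ x : Fin k → ℝ, ∑ i, (N.mulVec x i) ^ 2 ≤ 25 * ∑ j, (x j) ^ 2)
    (W : Matrix (Fin k) (Fin m) ℝ) :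
    trace ((N * W)ᵀ * (N * W)) ≤ 25 * trace (Wᵀ * W) := by
  rw [trace_sq_eq, trace_sq_eq, Finset.mul_sum]
  apply Finset.sum_le_sum
  intro j _
  have := hN2 (fun l => W l j)
  simpa [Matrix.mulVec, Matrix.mul_apply, dotProduct] using this

lemma trace_cs {m n : ℕ} (A B : Matrix (Fin m) (Fin n) ℝ) :
    (trace (Aᵀ * B))^2 ≤ trace (Aᵀ * A) * trace (Bᵀ * B) := by
  have h1 : trace (Aᵀ * B) = ∑ p : Fin n × Fin m, A p.2 p.1 * B p.2 p.1 := by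
    simp [Matrix.trace, Matrix.diag, Matrix.mul_apply, Fintype.sum_prod_type]
  have h2 : trace (Aᵀ * A) = ∑ p : Fin n × Fin m, (A p.2 p.1)^2 := by
    simp [Matrix.trace, Matrix.diag, Matrix.mul_apply, Fintype.sum_prod_type, sq]
  have h3 : trace (Bᵀ * B) = ∑ p : Fin n × Fin m, (B p.2 p.1)^2 := by
    simp [Matrix.trace, Matrix.diag, Matrix.mul_apply, Fintype.sum_prod_type, sq]
  rw [h1, h2, h3]
  exact Finset.sum_mul_sq_le_sq_mul_sq Finset.univ _ _

lemma poly_bound (k α : ℝ) (hk : 0 ≤ k) (hα0 : 0 < α) :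
    (10*k*α + 50*k*α^2 + 250*k*α^3 + 625*k*α^4)*(1-5*α) ≤ 20*k*α := by
  nlinarith [mul_nonneg hk (pow_nonneg hα0.le 4), mul_nonneg hk (pow_nonneg hα0.le 5),
    mul_nonneg hk hα0.le]


/-- Lemma 6: bounded change of the overlap after one retracted step.
`S` is the inverse square root of `YᵀY`, characterized as a symmetric matrix
with `S (YᵀY) S = I`; the spectral norm bound `‖N‖₂ ≤ 5` is expressed via the
quadratic-form characterization. -/
theorem overlap_bounded_difference {n k : ℕ}
    (X N : Matrix (Fin n) (Fin k) ℝ) (α : ℝ)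
    (hX : Xᵀ * X = 1) (hN : Xᵀ * N = 0)
    (hN2 : ∀ x : Fin k → ℝ, ∑ i, (N.mulVec x i) ^ 2 ≤ 25 * ∑ j, (x j) ^ 2)
    (hα0 : 0 < α) (hα : α < 1 / 5)
    (Y : Matrix (Fin n) (Fin k) ℝ) (hY : Y = X + α • N)
    (S : Matrix (Fin k) (Fin k) ℝ) (hSsymm : Sᵀ = S)
    (hS : S * (Yᵀ * Y) * S = 1)
    (X' : Matrix (Fin n) (Fin k) ℝ) (hX' : X' = Y * S)
    (V : Matrix (Fin n) (Fin k) ℝ) (hV : Vᵀ * V = 1) :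
    |frobSq (Vᵀ * X') - frobSq (Vᵀ * X)| ≤ 20 * k * α / (1 - 5 * α) := by
  have hk : (0:ℝ) ≤ (k:ℝ) := Nat.cast_nonneg k
  have hα5 : (0:ℝ) < 1 - 5*α := by linarith
  have hNX : Nᵀ * X = 0 := by
    have := congrArg Matrix.transpose hN
    simpa [Matrix.transpose_mul] using this
  set A := Vᵀ * X with hA
  set B := Vᵀ * N with hBdef
  set C := Vᵀ * Y with hCdef
  have hCeq : C = A + α • B := by
    rw [hCdef, hY, Matrix.mul_add, Matrix.mul_smul]
  have hM : Yᵀ * Y = 1 + (α*α) • (Nᵀ * N) := by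
    rw [hY]
    simp only [Matrix.transpose_add, Matrix.transpose_smul, Matrix.add_mul, Matrix.mul_add,
      Matrix.smul_mul, Matrix.mul_smul, hX, hN, hNX]
    simp [smul_smul]
  -- S*S identity
  have hSS : S * S + (α*α) • (S * (Nᵀ * N * S)) = 1 := by
    rw [← hS, hM]
    simp only [Matrix.mul_add, Matrix.add_mul, Matrix.mul_one, Matrix.mul_smul,
      Matrix.smul_mul, Matrix.mul_assoc]
  set a := trace (Aᵀ * A) with ha_def
  set b := trace (Bᵀ * B) with hb_def
  set ab := trace (Aᵀ * B) with hab_def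
  set t := trace ((C*S)ᵀ * (C*S)) with ht_def
  set E := N * (S * Cᵀ) with hE_def
  set e := trace (Eᵀ * E) with he_def
  set c := trace (Cᵀ * C) with hc_def
  -- frobSq rewrite
  have hfrob1 : frobSq (Vᵀ * X') = t := by
    unfold frobSq
    rw [hX', ht_def, hCdef]
    simp only [← Matrix.mul_assoc]
  have hfrob2 : frobSq (Vᵀ * X) = a := rfl
  -- identity: c = t + α² e
  have ht_eq : t = trace (Cᵀ * C * (S * S)) := by
    rw [ht_def, Matrix.transpose_mul, hSsymm, Matrix.mul_assoc, Matrix.trace_mul_comm]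
    simp only [Matrix.mul_assoc]
  have he_eq : e = trace (Cᵀ * C * (S * (Nᵀ * N * S))) := by
    have h1 : Eᵀ * E = (C * (S * (Nᵀ * (N * S)))) * Cᵀ := by
      rw [hE_def]
      simp only [Matrix.transpose_mul, Matrix.transpose_transpose, hSsymm, Matrix.mul_assoc]
    rw [he_def, h1, Matrix.trace_mul_comm]
    simp only [Matrix.mul_assoc]
  have hI : c = t + (α*α) * e := by
    have : c = trace (Cᵀ * C * (S * S + (α*α) • (S * (Nᵀ * N * S)))) := by
      rw [hSS, Matrix.mul_one]
    rw [this, Matrix.mul_add, Matrix.trace_add, Matrix.mul_smul, Matrix.trace_smul,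
      smul_eq_mul, ← ht_eq, ← he_eq]
  -- nonnegativity
  have ht0 : 0 ≤ t := trace_sq_nonneg _
  have he0 : 0 ≤ e := trace_sq_nonneg _
  have ha0 : 0 ≤ a := trace_sq_nonneg _
  have hb0 : 0 ≤ b := trace_sq_nonneg _
  -- e ≤ 25 t
  have he25 : e ≤ 25 * t := by
    have h1 := trace_N_bound N hN2 (S * Cᵀ)
    have h2 : trace ((S * Cᵀ)ᵀ * (S * Cᵀ)) = t := by
      have hT : (S * Cᵀ)ᵀ = C * S := by
        rw [Matrix.transpose_mul, Matrix.transpose_transpose, hSsymm]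
      have hT2 : (C*S)ᵀ = S * Cᵀ := by rw [Matrix.transpose_mul, hSsymm]
      rw [hT, Matrix.trace_mul_comm, ht_def, hT2]
    rw [← hE_def] at h1
    rw [h2] at h1
    exact h1
  -- c expansion
  have hcexp : c = a + 2*α*ab + (α*α)*b := by
    have hBA : trace (Bᵀ * A) = ab := by
      rw [hab_def, ← Matrix.trace_transpose (Aᵀ * B)]
      simp [Matrix.transpose_mul]
    have : Cᵀ * C = Aᵀ * A + α • (Aᵀ * B) + α • (Bᵀ * A) + (α*α) • (Bᵀ * B) := by
      rw [hCeq]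
      simp only [Matrix.transpose_add, Matrix.transpose_smul, Matrix.add_mul, Matrix.mul_add,
        Matrix.smul_mul, Matrix.mul_smul, smul_smul, smul_add]
      abel
    rw [hc_def, this]
    simp only [Matrix.trace_add, Matrix.trace_smul, smul_eq_mul]
    rw [hBA, ← hab_def, ← ha_def, ← hb_def]
    ring
  -- bounds a ≤ k, b ≤ 25k
  have hak : a ≤ (k:ℝ) := by
    have h := trace_proj_le V hV X
    rw [hX] at h
    have h1 : trace (1 : Matrix (Fin k) (Fin k) ℝ) = (k:ℝ) := by simp
    rw [h1] at h
    exact h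
  have hbk : b ≤ 25*k := by
    have h1 := trace_proj_le V hV N
    have h2 := trace_N_bound N hN2 (1 : Matrix (Fin k) (Fin k) ℝ)
    simp only [Matrix.mul_one, Matrix.transpose_one, Matrix.one_mul, Matrix.trace_one] at h2
    calc b ≤ trace (Nᵀ * N) := h1
    _ ≤ 25 * k := by simpa using h2
  have habk : |ab| ≤ 5*(k:ℝ) := by
    have h1 := trace_cs A B
    rw [← hab_def, ← ha_def, ← hb_def] at h1
    have h2 : ab^2 ≤ (5*(k:ℝ))^2 := by nlinarith [mul_le_mul hak hbk hb0 hk]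
    calc |ab| = Real.sqrt (ab^2) := (Real.sqrt_sq_eq_abs ab).symm
    _ ≤ Real.sqrt ((5*(k:ℝ))^2) := Real.sqrt_le_sqrt h2
    _ = |5*(k:ℝ)| := Real.sqrt_sq_eq_abs _
    _ = 5*(k:ℝ) := abs_of_nonneg (by positivity)
  have hab1 := abs_le.mp habk
  rw [hfrob1, hfrob2]
  have hq : (0:ℝ) ≤ α*α := mul_nonneg hα0.le hα0.le
  have hc5 : α * ab ≤ α*(5*(k:ℝ)) := mul_le_mul_of_nonneg_left hab1.2 hα0.le
  have hc7 : (α*α) * b ≤ (α*α)*(25*(k:ℝ)) := mul_le_mul_of_nonneg_left hbk hq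
  have hcle : c ≤ (k:ℝ) + 10*k*α + 25*k*(α*α) := by nlinarith [hcexp, hc5, hc7, hak]
  have htc : t ≤ c := by nlinarith [hI, he0, mul_nonneg hq he0]
  have hc0 : 0 ≤ c := le_trans ht0 htc
  have heC : e ≤ 25*c := by linarith [he25]
  have hbound : |t - a| ≤ 10*k*α + 50*k*α^2 + 250*k*α^3 + 625*k*α^4 := by
    have h5 : α * ab ≤ α*(5*k) := mul_le_mul_of_nonneg_left hab1.2 hα0.le
    have h6 : α * (-ab) ≤ α*(5*k) := mul_le_mul_of_nonneg_left (by linarith [hab1.1]) hα0.le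
    have h7 : (α*α) * b ≤ (α*α)*(25*k) := mul_le_mul_of_nonneg_left hbk hq
    have h8 : (α*α) * e ≤ (α*α)*(25*c) := mul_le_mul_of_nonneg_left heC hq
    have h9 : (α*α)*(25*c) ≤ (α*α)*(25*((k:ℝ) + 10*k*α + 25*k*(α*α))) := by
      have : 25*c ≤ 25*((k:ℝ) + 10*k*α + 25*k*(α*α)) := by linarith
      exact mul_le_mul_of_nonneg_left this hq
    have h10 : 0 ≤ (α*α)*e := mul_nonneg hq he0
    have h11 : 0 ≤ (α*α)*b := mul_nonneg hq hb0
    rw [abs_le]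
    constructor <;> nlinarith [hI, hcexp]
  rw [le_div_iff₀ hα5]
  have h12 := mul_le_mul_of_nonneg_right hbound hα5.le
  have h13 := poly_bound (k:ℝ) α hk hα0
  linarith [h12, h13]
end
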